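/- arXiv:1710.00911 — 6 statements merged into one kernel-verified Lean document; each statement's English description precedes it below -/
import Mathlib

section
/- Let {U(t,s)} be an evolution system on a Banach space X for a family A(t) with common domain X¹, such that U(t,s)X ⊂ X¹ for t > s, ∂ₜU(t,s) = -A(t)U(t,s), ‖∂ₜU(t,s)‖_{L(X,X)} ≤ D₂/(t-s), the map (s,t) ↦ ∂ₜU(t,s) is strongly continuous on {t > s}, and t ↦ A(t) ∈ L(X¹,X) is Hölder continuous. Then for any sequences t_n → t, s_n → s with t > s and ū_n → ū in X, one has U(t_n, s_n)ū_n → U(t,s)ū in X¹ (graph norm). -/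
open Filter

/-- Continuity of a parabolic evolution system into the domain `X¹` (graph norm):
if `tₙ → t`, `sₙ → s` with `t > s` and `ūₙ → ū` in `X`, then
`U(tₙ,sₙ)ūₙ → U(t,s)ū` in `X¹`. Here `V t s` is `U(t,s)` viewed as a map into `X¹`. -/
theorem stmt4 {X X1 : Type*} [NormedAddCommGroup X] [NormedSpace ℝ X] [CompleteSpace X]
    [NormedAddCommGroup X1] [NormedSpace ℝ X1]
    (ι : X1 →L[ℝ] X)
    (A : ℝ → X1 →L[ℝ] X)
    (U : ℝ → ℝ → X →L[ℝ] X)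
    (V : ℝ → ℝ → X →L[ℝ] X1)
    (C₁ C₂ D₂ L γ : ℝ) (hC₁ : 0 < C₁) (hγ0 : 0 < γ) (hγ1 : γ ≤ 1)
    (hAlow : ∀ t : ℝ, 0 ≤ t → ∀ v : X1, C₁ * ‖v‖ ≤ ‖A t v‖)
    (hAup : ∀ t : ℝ, 0 ≤ t → ∀ v : X1, ‖A t v‖ ≤ C₂ * ‖v‖)
    (hUV : ∀ t s : ℝ, 0 ≤ s → s < t → ∀ u : X, ι (V t s u) = U t s u)
    (hderiv : ∀ s : ℝ, 0 ≤ s → ∀ u : X, ∀ t, s < t →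
      HasDerivAt (fun τ => U τ s u) (-(A t (V t s u))) t)
    (hbound : ∀ t s : ℝ, 0 ≤ s → s < t → ∀ u : X, ‖A t (V t s u)‖ ≤ D₂ / (t - s) * ‖u‖)
    (hstrong : ∀ u : X, ContinuousOn (fun p : ℝ × ℝ => A p.1 (V p.1 p.2 u))
      {p : ℝ × ℝ | 0 ≤ p.2 ∧ p.2 < p.1})
    (hHolder : ∀ s t : ℝ, 0 ≤ s → 0 ≤ t → ∀ v : X1,
      ‖(A t - A s) v‖ ≤ L * |t - s| ^ γ * ‖v‖)
    (tn sn : ℕ → ℝ) (un : ℕ → X) (t s : ℝ) (ub : X)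
    (htn : Tendsto tn atTop (nhds t))
    (hsn : Tendsto sn atTop (nhds s))
    (hun : Tendsto un atTop (nhds ub))
    (hts : s < t) (hs : 0 ≤ s) (hsn0 : ∀ n, 0 ≤ sn n) (hsntn : ∀ n, sn n < tn n) :
    Tendsto (fun n => V (tn n) (sn n) (un n)) atTop (nhds (V t s ub)) := by
  have ht0 : 0 ≤ t := hs.trans hts.le
  have htn0 : ∀ n, 0 ≤ tn n := fun n => (hsn0 n).trans (hsntn n).le
  have hΔ : Tendsto (fun n => tn n - sn n) atTop (nhds (t - s)) := htn.sub hsn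
  have hts' : (t - s) ≠ 0 := sub_ne_zero.mpr hts.ne'
  have hun0 : Tendsto (fun n => ‖un n - ub‖) atTop (nhds 0) :=
    tendsto_iff_norm_sub_tendsto_zero.mp hun
  -- Term 1: strong continuity
  have hT1 : Tendsto (fun n => A (tn n) (V (tn n) (sn n) ub)) atTop
      (nhds (A t (V t s ub))) := by
    have hc := (hstrong ub) (t, s) ⟨hs, hts⟩
    have hseq : Tendsto (fun n => (tn n, sn n)) atTop
        (nhdsWithin (t, s) {p : ℝ × ℝ | 0 ≤ p.2 ∧ p.2 < p.1}) :=
      tendsto_nhdsWithin_of_tendsto_nhds_of_eventually_within _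
        (htn.prodMk_nhds hsn) (Eventually.of_forall fun n => ⟨hsn0 n, hsntn n⟩)
    exact Filter.Tendsto.comp hc hseq
  -- Term 2
  have hT2 : Tendsto (fun n => A (tn n) (V (tn n) (sn n) (un n - ub))) atTop (nhds 0) := by
    rw [tendsto_zero_iff_norm_tendsto_zero]
    apply squeeze_zero (fun n => norm_nonneg _)
      (fun n => hbound (tn n) (sn n) (hsn0 n) (hsntn n) (un n - ub))
    have h := ((tendsto_const_nhds (x := D₂)).div hΔ hts').mul hun0
    simpa using h
  -- bound on ‖V (tn n) (sn n) (un n)‖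
  have hVb : ∀ n, ‖V (tn n) (sn n) (un n)‖ ≤ D₂ / (tn n - sn n) * ‖un n‖ / C₁ := by
    intro n
    rw [le_div_iff₀ hC₁, mul_comm]
    exact (hAlow (tn n) (htn0 n) _).trans (hbound (tn n) (sn n) (hsn0 n) (hsntn n) (un n))
  -- Term 3: Hölder continuity of A
  have hpow : Tendsto (fun n => |t - tn n| ^ γ) atTop (nhds 0) := by
    have h1 : Tendsto (fun n => |t - tn n|) atTop (nhds 0) := by
      have := (tendsto_const_nhds (x := t)).sub htn
      simpa using this.abs
    have h2 : Tendsto (fun x : ℝ => x ^ γ) (nhds 0) (nhds ((0 : ℝ) ^ γ)) :=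
      (Real.continuousAt_rpow_const 0 γ (Or.inr hγ0.le)).tendsto
    rw [Real.zero_rpow hγ0.ne'] at h2
    exact h2.comp h1
  have hT3 : Tendsto (fun n => (A t - A (tn n)) (V (tn n) (sn n) (un n))) atTop (nhds 0) := by
    rw [tendsto_zero_iff_norm_tendsto_zero]
    apply squeeze_zero (g := fun n =>
        |L| * |t - tn n| ^ γ * (D₂ / (tn n - sn n) * ‖un n‖ / C₁))
      (fun n => norm_nonneg _)
    · intro n
      have h1 := hHolder (tn n) t (htn0 n) ht0 (V (tn n) (sn n) (un n))
      have h2 : L * |t - tn n| ^ γ * ‖V (tn n) (sn n) (un n)‖ ≤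
          |L| * |t - tn n| ^ γ * ‖V (tn n) (sn n) (un n)‖ :=
        mul_le_mul_of_nonneg_right
          (mul_le_mul_of_nonneg_right (le_abs_self L) (by positivity)) (norm_nonneg _)
      refine h1.trans (h2.trans ?_)
      exact mul_le_mul_of_nonneg_left (hVb n) (by positivity)
    · have h := ((tendsto_const_nhds (x := |L|)).mul hpow).mul
        ((((tendsto_const_nhds (x := D₂)).div hΔ hts').mul hun.norm).div_const C₁)
      simpa using h
  -- decomposition
  have key : ∀ n, A t (V (tn n) (sn n) (un n) - V t s ub)
      = (A (tn n) (V (tn n) (sn n) ub) - A t (V t s ub))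
        + A (tn n) (V (tn n) (sn n) (un n - ub))
        + (A t - A (tn n)) (V (tn n) (sn n) (un n)) := by
    intro n
    simp only [map_sub, ContinuousLinearMap.sub_apply]
    abel
  have hA0 : Tendsto (fun n => A t (V (tn n) (sn n) (un n) - V t s ub)) atTop (nhds 0) := by
    simp only [key]
    have := ((hT1.sub (tendsto_const_nhds (x := A t (V t s ub)))).add hT2).add hT3
    simpa using this
  -- conclude in X1
  rw [tendsto_iff_norm_sub_tendsto_zero]
  apply squeeze_zero (g := fun n => ‖A t (V (tn n) (sn n) (un n) - V t s ub)‖ / C₁)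
    (fun n => norm_nonneg _)
  · intro n
    rw [le_div_iff₀ hC₁, mul_comm]
    exact hAlow t ht0 _
  · have := hA0.norm.div_const C₁
    simpa using this
end

section
/- Let X be a Banach space, α ∈ (0,1), T > 0, and let S₀ be an analytic semigroup with ‖A₀^β S₀(t)‖_{L(X,X)} ≤ M_β t^{-β} for β ∈ {α, 1+α} and t > 0, with fractional space X^α = D(A₀^α). Let G_n : Δ → L(X,X), where Δ = {(t,s) ∈ [0,T]² : t ≥ s}, satisfy ‖G_n(t,s)‖ ≤ R_G, (t,s) ↦ G_n(t,s)ū continuous for each ū, and ∫ₛᵗ G_n(r,s)ū dr → 0 in X uniformly in ū from bounded sets, t ∈ [0,T], s ∈ [0,t]. Then ∫ₛᵗ S₀(t-r) G_n(r,s) ū dr → 0 in X^α, uniformly in ū from bounded sets in X, t ∈ [0,T] and s ∈ [0,t]. -/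
open Set intervalIntegral Filter Asymptotics MeasureTheory Topology

lemma contAux {X Xα : Type*} [NormedAddCommGroup X] [NormedSpace ℝ X]
    [NormedAddCommGroup Xα] [NormedSpace ℝ Xα]
    (SA : ℝ → X →L[ℝ] Xα) (Mα α : ℝ)
    (hSA : ∀ τ : ℝ, 0 < τ → ‖SA τ‖ ≤ Mα * τ ^ (-α))
    (hScont : ∀ (u : X) (τ : ℝ), 0 < τ → ContinuousAt (fun σ => SA σ u) τ)
    (v : ℝ → X) (hv : Continuous v) (t : ℝ) :
    ContinuousOn (fun r => SA (t - r) (v r)) (Iio t) := by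
  intro r₀ hr₀
  have hpos : 0 < t - r₀ := sub_pos.2 hr₀
  have h1 : ContinuousAt (fun r => SA (t - r) (v r₀)) r₀ :=
    (hScont (v r₀) (t - r₀) hpos).comp ((continuous_const.sub continuous_id).continuousAt)
  have hev : ∀ᶠ r in 𝓝 r₀, r ∈ Iio t := isOpen_Iio.eventually_mem hr₀
  have h2 : Tendsto (fun r => SA (t - r) (v r - v r₀)) (𝓝 r₀) (𝓝 0) := by
    apply squeeze_zero_norm' (a := fun r => (Mα * (t - r) ^ (-α)) * ‖v r - v r₀‖)
    · filter_upwards [hev] with r hr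
      have hp : 0 < t - r := sub_pos.2 hr
      calc ‖SA (t - r) (v r - v r₀)‖ ≤ ‖SA (t - r)‖ * ‖v r - v r₀‖ :=
            (SA (t - r)).le_opNorm _
        _ ≤ (Mα * (t - r) ^ (-α)) * ‖v r - v r₀‖ :=
            mul_le_mul_of_nonneg_right (hSA _ hp) (norm_nonneg _)
    · have hb : Tendsto (fun r => (Mα * (t - r) ^ (-α)) * ‖v r - v r₀‖) (𝓝 r₀)
          (𝓝 ((Mα * (t - r₀) ^ (-α)) * ‖v r₀ - v r₀‖)) := by
        apply Tendsto.mul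
        · exact tendsto_const_nhds.mul
            ((Real.continuousAt_rpow_const _ _ (Or.inl hpos.ne')).comp
              ((continuous_const.sub continuous_id).continuousAt))
        · exact ((hv.tendsto r₀).sub tendsto_const_nhds).norm
      simpa using hb
  have heq : (fun r => SA (t - r) (v r)) =
      fun r => SA (t - r) (v r - v r₀) + SA (t - r) (v r₀) := by
    funext r; rw [← map_add]; congr 1; abel
  rw [heq]
  refine ContinuousAt.continuousWithinAt ?_
  have := h2.add h1
  unfold ContinuousAt
  simpa using this

set_option maxHeartbeats 2000000 in
/-- If `Gₙ(t,s)` are uniformly bounded, strongly continuous and `∫ₛᵗ Gₙ(r,s)ū dr → 0`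
uniformly (in `ū` from bounded sets, `t ∈ [0,T]`, `s ∈ [0,t]`), and `S₀` is an analytic
semigroup with `‖A₀^β S₀(t)‖ ≤ M_β t^{-β}` for `β = α, 1+α`, then
`∫ₛᵗ S₀(t-r)Gₙ(r,s)ū dr → 0` in `X^α`, uniformly in the same sense.
Here `SA t : X → X^α` represents `S₀(t)` viewed as a map into `X^α`. -/
theorem stmt6 {X Xα : Type*} [NormedAddCommGroup X] [NormedSpace ℝ X] [CompleteSpace X]
    [NormedAddCommGroup Xα] [NormedSpace ℝ Xα] [CompleteSpace Xα]
    (α T Mα M1α R_G : ℝ) (hα0 : 0 < α) (hα1 : α < 1) (hT : 0 < T)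
    (SA : ℝ → X →L[ℝ] Xα) (DS : ℝ → X → Xα)
    (hSA : ∀ t : ℝ, 0 < t → ‖SA t‖ ≤ Mα * t ^ (-α))
    (hDS : ∀ (u : X) (t : ℝ), 0 < t → HasDerivAt (fun τ => SA τ u) (DS t u) t)
    (hDSb : ∀ (u : X) (t : ℝ), 0 < t → ‖DS t u‖ ≤ M1α * t ^ (-(1 + α)) * ‖u‖)
    (G : ℕ → ℝ → ℝ → X →L[ℝ] X)
    (hGb : ∀ n (t s : ℝ), 0 ≤ s → s ≤ t → t ≤ T → ‖G n t s‖ ≤ R_G)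
    (hGcont : ∀ n (u : X), ContinuousOn (fun p : ℝ × ℝ => G n p.1 p.2 u)
      {p : ℝ × ℝ | 0 ≤ p.2 ∧ p.2 ≤ p.1 ∧ p.1 ≤ T})
    (hGconv : ∀ R > (0:ℝ), ∀ ε > (0:ℝ), ∃ N, ∀ n ≥ N, ∀ u : X, ‖u‖ ≤ R →
      ∀ t ∈ Icc (0:ℝ) T, ∀ s ∈ Icc (0:ℝ) t, ‖∫ r in s..t, G n r s u‖ ≤ ε) :
    ∀ R > (0:ℝ), ∀ ε > (0:ℝ), ∃ N, ∀ n ≥ N, ∀ u : X, ‖u‖ ≤ R →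
      ∀ t ∈ Icc (0:ℝ) T, ∀ s ∈ Icc (0:ℝ) t,
        ‖∫ r in s..t, SA (t - r) (G n r s u)‖ ≤ ε := by
  intro R hR ε hε
  -- nonnegativity of constants
  have hMα0 : 0 ≤ Mα := by
    have h := hSA 1 one_pos
    have := (norm_nonneg (SA 1)).trans h
    simpa using this
  have hRG0 : 0 ≤ R_G := (norm_nonneg _).trans (hGb 0 0 0 le_rfl le_rfl hT.le)
  set M1 : ℝ := max M1α 0 with hM1def
  have hM10 : 0 ≤ M1 := le_max_right _ _
  have h1α : 0 < 1 - α := by linarith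
  set P : ℝ := Mα * R_G * R with hPdef
  have hP0 : 0 ≤ P := by positivity
  set c : ℝ := min (ε * (1 - α) / (2 * (P + 1))) 1 with hcdef
  have hc0 : 0 < c := by
    apply lt_min _ one_pos
    positivity
  set δ : ℝ := c ^ (1 - α)⁻¹ with hδdef
  have hδ0 : 0 < δ := Real.rpow_pos_of_pos hc0 _
  have hδpow : δ ^ (1 - α) = c := Real.rpow_inv_rpow hc0.le h1α.ne'
  have hhalf : P * δ ^ (1 - α) / (1 - α) ≤ ε / 2 := by
    rw [hδpow]
    have hc1 : c ≤ ε * (1 - α) / (2 * (P + 1)) := min_le_left _ _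
    rw [div_le_iff₀ h1α]
    have h2 : P * c ≤ P * (ε * (1 - α) / (2 * (P + 1))) :=
      mul_le_mul_of_nonneg_left hc1 hP0
    refine h2.trans ?_
    rw [mul_div_assoc']
    rw [div_le_iff₀ (by positivity)]
    ring_nf
    nlinarith [hP0, hε.le, h1α.le]
  set D : ℝ := Mα * δ ^ (-α) + M1 * δ ^ (-(1 + α)) * T + 1 with hDdef
  have hD0 : 0 < D := by positivity
  set ε' : ℝ := (ε / 2) / D with hε'def
  have hε'0 : 0 < ε' := by positivity
  have hsum : (Mα * δ ^ (-α) + M1 * δ ^ (-(1 + α)) * T) * ε' ≤ ε / 2 := by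
    have hSD : Mα * δ ^ (-α) + M1 * δ ^ (-(1 + α)) * T ≤ D := by
      rw [hDdef]; linarith
    calc (Mα * δ ^ (-α) + M1 * δ ^ (-(1 + α)) * T) * ε' ≤ D * ε' :=
          mul_le_mul_of_nonneg_right hSD hε'0.le
      _ = ε / 2 := by rw [hε'def, mul_comm, div_mul_cancel₀ _ hD0.ne']
  obtain ⟨N, hN⟩ := hGconv R hR ε' hε'0
  refine ⟨N, fun n hn u hu t ht s hs => ?_⟩
  obtain ⟨ht0, htT⟩ := ht
  obtain ⟨hs0, hst⟩ := hs
  -- the clamped version of r ↦ G n r s u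
  set cl : ℝ → ℝ := fun r => max s (min r t) with hcl
  have hclcont : Continuous cl := continuous_const.max (continuous_id.min continuous_const)
  have hclmem : ∀ r, cl r ∈ Icc s t := fun r =>
    ⟨le_max_left _ _, max_le hst (min_le_right _ _)⟩
  have hcleq : ∀ r ∈ Icc s t, cl r = r := by
    intro r hr
    simp only [hcl]
    rw [min_eq_left hr.2, max_eq_right hr.1]
  set v : ℝ → X := fun r => G n (cl r) s u with hvdef
  have hGcO : ContinuousOn (fun ρ => G n ρ s u) (Icc s t) := by
    have := (hGcont n u).comp (f := fun ρ : ℝ => (ρ, s))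
      (continuous_id.prodMk continuous_const).continuousOn
      (fun ρ (hρ : ρ ∈ Icc s t) => ⟨hs0, hρ.1, hρ.2.trans htT⟩)
    exact this
  have hv : Continuous v :=
    hGcO.comp_continuous hclcont hclmem
  have hvb : ∀ r, ‖v r‖ ≤ R_G * R := by
    intro r
    calc ‖G n (cl r) s u‖ ≤ ‖G n (cl r) s‖ * ‖u‖ := (G n (cl r) s).le_opNorm u
      _ ≤ R_G * R := mul_le_mul
          (hGb n (cl r) s hs0 (hclmem r).1 ((hclmem r).2.trans htT)) hu (norm_nonneg _) hRG0
  have hveq : ∀ r ∈ Icc s t, v r = G n r s u := by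
    intro r hr; simp only [hvdef]; rw [hcleq r hr]
  -- strong continuity of SA
  have hScont : ∀ (w : X) (τ : ℝ), 0 < τ → ContinuousAt (fun σ => SA σ w) τ :=
    fun w τ hτ => (hDS w τ hτ).continuousAt
  set f : ℝ → Xα := fun r => SA (t - r) (v r) with hfdef
  have hfcont : ContinuousOn f (Iio t) := contAux SA Mα α hSA hScont v hv t
  -- goal integrand agrees with f on [s, t]
  have hgoal_eq : (∫ r in s..t, SA (t - r) (G n r s u)) = ∫ r in s..t, f r := by
    apply intervalIntegral.integral_congr
    intro r hr
    rw [uIcc_of_le hst] at hr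
    simp only [hfdef]
    rw [hveq r hr]
  rw [hgoal_eq]
  -- integrability of f and the key tail bound
  have hbint : ∀ a : ℝ, IntervalIntegrable (fun r => (t - r) ^ (-α)) volume a t := by
    intro a
    have h := ((intervalIntegrable_rpow' (a := 0) (b := t - a) (r := -α) (by linarith)).comp_sub_left t).symm
    simpa using h
  have hfint : ∀ a, s ≤ a → a ≤ t → IntervalIntegrable f volume a t := by
    intro a _ hat
    rw [intervalIntegrable_iff_integrableOn_Ioc_of_le hat]
    apply IntegrableOn.congr_set_ae _ (Ioo_ae_eq_Ioc (a := a) (b := t)).symm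
    have hmeas : AEStronglyMeasurable f (volume.restrict (Ioo a t)) :=
      (hfcont.mono Ioo_subset_Iio_self).aestronglyMeasurable measurableSet_Ioo
    apply Integrable.mono' (g := fun r => (Mα * R_G * R) * (t - r) ^ (-α)) _ hmeas
    · filter_upwards [ae_restrict_mem measurableSet_Ioo] with r hr
      have hp : 0 < t - r := sub_pos.2 hr.2
      calc ‖f r‖ ≤ ‖SA (t - r)‖ * ‖v r‖ := (SA (t - r)).le_opNorm _
        _ ≤ (Mα * (t - r) ^ (-α)) * (R_G * R) :=
            mul_le_mul (hSA _ hp) (hvb r) (norm_nonneg _) (by positivity)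
        _ = (Mα * R_G * R) * (t - r) ^ (-α) := by ring
    · have h := (hbint a).const_mul (Mα * R_G * R)
      rw [intervalIntegrable_iff_integrableOn_Ioc_of_le hat] at h
      exact h.mono_set Ioo_subset_Ioc_self

  -- tail bound: for any a in [s,t], ‖∫_a^t f‖ ≤ P (t-a)^{1-α}/(1-α)
  have key2 : ∀ a, s ≤ a → a ≤ t → ‖∫ r in a..t, f r‖ ≤ P * (t - a) ^ (1 - α) / (1 - α) := by
    intro a hsa hat
    have h1 : ∀ᵐ r ∂volume.restrict (uIoc a t), ‖f r‖ ≤ (Mα * R_G * R) * (t - r) ^ (-α) := by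
      rw [uIoc_of_le hat]
      have h2 : ∀ᵐ r ∂volume.restrict (Ioc a t), r ∈ Ioc a t := ae_restrict_mem measurableSet_Ioc
      have h3 : ∀ᵐ r ∂volume.restrict (Ioc a t), r ≠ t := by
        refine ae_restrict_of_ae ?_
        have h4 : volume ({t} : Set ℝ) = 0 := measure_singleton t
        filter_upwards [compl_mem_ae_iff.2 h4] with r hr
        simpa using hr
      filter_upwards [h2, h3] with r hr hrt
      have hp : 0 < t - r := sub_pos.2 (lt_of_le_of_ne hr.2 hrt)
      calc ‖f r‖ ≤ ‖SA (t - r)‖ * ‖v r‖ := (SA (t - r)).le_opNorm _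
        _ ≤ (Mα * (t - r) ^ (-α)) * (R_G * R) :=
            mul_le_mul (hSA _ hp) (hvb r) (norm_nonneg _) (by positivity)
        _ = (Mα * R_G * R) * (t - r) ^ (-α) := by ring
    have h4 := intervalIntegral.norm_integral_le_abs_of_norm_le h1 ((hbint a).const_mul (Mα * R_G * R))
    have h5 : (∫ r in a..t, (Mα * R_G * R) * (t - r) ^ (-α)) = P * (t - a) ^ (1 - α) / (1 - α) := by
      rw [intervalIntegral.integral_const_mul]
      have h6 : (∫ r in a..t, (t - r) ^ (-α)) = ∫ x in (0:ℝ)..(t - a), x ^ (-α) := by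
        have := intervalIntegral.integral_comp_sub_left (a := a) (b := t)
          (fun x : ℝ => x ^ (-α)) t
        simpa using this
      rw [h6, integral_rpow (Or.inl (by linarith : (-1:ℝ) < -α)),
        Real.zero_rpow (by intro h; linarith : -α + 1 ≠ 0)]
      have he : -α + 1 = 1 - α := by ring
      rw [he, hPdef]
      ring
    have hnn : 0 ≤ P * (t - a) ^ (1 - α) / (1 - α) :=
      div_nonneg (mul_nonneg hP0 (Real.rpow_nonneg (sub_nonneg.2 hat) _)) h1α.le
    calc ‖∫ r in a..t, f r‖ ≤ |∫ r in a..t, (Mα * R_G * R) * (t - r) ^ (-α)| := h4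
      _ = P * (t - a) ^ (1 - α) / (1 - α) := by rw [h5, abs_of_nonneg hnn]
  have key2' : ∀ a, s ≤ a → a ≤ t → t - a ≤ δ → ‖∫ r in a..t, f r‖ ≤ ε / 2 := by
    intro a hsa hat htd
    refine (key2 a hsa hat).trans (le_trans ?_ hhalf)
    have hr1 : (t - a) ^ (1 - α) ≤ δ ^ (1 - α) :=
      Real.rpow_le_rpow (sub_nonneg.2 hat) htd h1α.le
    have := mul_le_mul_of_nonneg_left hr1 hP0
    exact (div_le_div_iff_of_pos_right h1α).mpr this
  by_cases hcase : t - s ≤ δ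
  · exact (key2' s le_rfl hst hcase).trans (by linarith)
  push_neg at hcase
  set b : ℝ := t - δ with hbdef
  have hb1 : s < b := by rw [hbdef]; linarith
  have hb2 : b < t := by rw [hbdef]; linarith
  have htb : t - b = δ := by rw [hbdef]; ring
  -- the primitive F of v
  set F : ℝ → X := fun r => ∫ ρ in s..r, v ρ with hFdef
  have hF' : ∀ r : ℝ, HasDerivAt F (v r) r := fun r =>
    intervalIntegral.integral_hasDerivAt_right (hv.intervalIntegrable s r)
      hv.aestronglyMeasurable.stronglyMeasurableAtFilter hv.continuousAt
  have hFb : ∀ r ∈ Icc s t, ‖F r‖ ≤ ε' := by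
    intro r hr
    have heq2 : F r = ∫ ρ in s..r, G n ρ s u := by
      apply intervalIntegral.integral_congr
      intro ρ hρ
      rw [uIcc_of_le hr.1] at hρ
      exact hveq ρ ⟨hρ.1, hρ.2.trans hr.2⟩
    rw [heq2]
    exact hN n hn u hu r ⟨hs0.trans hr.1, hr.2.trans htT⟩ s ⟨hs0, hr.1⟩
  set g : ℝ → Xα := fun r => SA (t - r) (F r) with hgdef
  -- derivative of g within [s,b]
  have hgderiv : ∀ r₀ ∈ Icc s b, HasDerivWithinAt g
      (SA (t - r₀) (v r₀) + -(DS (t - r₀) (F r₀))) (Icc s b) r₀ := by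
    intro r₀ hr₀
    have hδτ : δ ≤ t - r₀ := by
      have := hr₀.2; rw [hbdef] at this; linarith
    have hτ : 0 < t - r₀ := lt_of_lt_of_le hδ0 hδτ
    have hg1 : HasDerivAt (fun r => SA (t - r) (F r₀)) (-(DS (t - r₀) (F r₀))) r₀ :=
      (hDS (F r₀) (t - r₀) hτ).comp_const_sub t r₀
    have hg2 : HasDerivWithinAt (fun r => SA (t - r) (F r - F r₀)) (SA (t - r₀) (v r₀))
        (Icc s b) r₀ := by
      rw [hasDerivWithinAt_iff_isLittleO]
      have hA : (fun r => SA (t - r) (F r - F r₀ - (r - r₀) • v r₀))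
          =o[𝓝[Icc s b] r₀] (fun r => r - r₀) := by
        have hz := hasDerivWithinAt_iff_isLittleO.mp ((hF' r₀).hasDerivWithinAt (s := Icc s b))
        refine IsBigO.trans_isLittleO ?_ hz
        rw [isBigO_iff]
        refine ⟨Mα * δ ^ (-α), ?_⟩
        filter_upwards [self_mem_nhdsWithin] with r hr
        have hδτr : δ ≤ t - r := by
          have := hr.2; rw [hbdef] at this; linarith
        have hpr : 0 < t - r := lt_of_lt_of_le hδ0 hδτr
        calc ‖SA (t - r) (F r - F r₀ - (r - r₀) • v r₀)‖
            ≤ ‖SA (t - r)‖ * ‖F r - F r₀ - (r - r₀) • v r₀‖ := (SA (t - r)).le_opNorm _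
          _ ≤ (Mα * (t - r) ^ (-α)) * ‖F r - F r₀ - (r - r₀) • v r₀‖ :=
              mul_le_mul_of_nonneg_right (hSA _ hpr) (norm_nonneg _)
          _ ≤ (Mα * δ ^ (-α)) * ‖F r - F r₀ - (r - r₀) • v r₀‖ := by
              refine mul_le_mul_of_nonneg_right (mul_le_mul_of_nonneg_left ?_ hMα0)
                (norm_nonneg _)
              exact Real.rpow_le_rpow_of_nonpos hδ0 hδτr (by linarith)
          _ = Mα * δ ^ (-α) * ‖F r - F r₀ - (r - r₀) • v r₀‖ := by ring
      have hB : (fun r => (r - r₀) • (SA (t - r) (v r₀) - SA (t - r₀) (v r₀)))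
          =o[𝓝[Icc s b] r₀] (fun r => r - r₀) := by
        rw [isLittleO_iff]
        intro C hC
        have hw : Tendsto (fun r => SA (t - r) (v r₀) - SA (t - r₀) (v r₀))
            (𝓝[Icc s b] r₀) (𝓝 0) := by
          have h1 : ContinuousAt (fun r => SA (t - r) (v r₀)) r₀ :=
            (hScont (v r₀) (t - r₀) hτ).comp
              ((continuous_const.sub continuous_id).continuousAt)
          have h2 := (h1.continuousWithinAt (s := Icc s b)).sub
            (continuousWithinAt_const (b := SA (t - r₀) (v r₀)))
          simpa [ContinuousWithinAt, sub_self, Pi.sub_def] using h2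
        filter_upwards [Metric.tendsto_nhds.mp hw C hC] with r hr
        rw [dist_zero_right] at hr
        calc ‖(r - r₀) • (SA (t - r) (v r₀) - SA (t - r₀) (v r₀))‖
            = ‖SA (t - r) (v r₀) - SA (t - r₀) (v r₀)‖ * ‖r - r₀‖ := by
              rw [norm_smul]; ring
          _ ≤ C * ‖r - r₀‖ := mul_le_mul_of_nonneg_right hr.le (norm_nonneg _)
      have hsum2 := hA.add hB
      refine hsum2.congr' (Eventually.of_forall fun r => ?_) EventuallyEq.rfl
      simp only [map_sub, _root_.map_smul, sub_self, map_zero, smul_sub]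
      abel
    have hcomb := hg2.add hg1.hasDerivWithinAt
    have hfe : (fun r => SA (t - r) (F r - F r₀) + SA (t - r) (F r₀)) = g := by
      funext r; rw [hgdef, ← map_add]; congr 1; abel
    rw [← hfe]
    exact hcomb
  -- derivative of the primitive of f within [s,b]
  have hprim : ∀ r ∈ Icc s b, HasDerivAt (fun r' => ∫ x in s..r', f x) (f r) r := by
    intro r hr
    have hrt : r < t := lt_of_le_of_lt hr.2 hb2
    have hsub : IntervalIntegrable f volume s r := by
      apply (hfint s le_rfl hst).mono_set
      rw [uIcc_of_le (hr.1), uIcc_of_le hst]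
      exact Icc_subset_Icc le_rfl (hr.2.trans hb2.le)
    refine intervalIntegral.integral_hasDerivAt_right hsub ?_ ?_
    · exact AEStronglyMeasurable.stronglyMeasurableAtFilter_of_mem
        (hfcont.aestronglyMeasurable measurableSet_Iio) (Iio_mem_nhds hrt)
    · exact hfcont.continuousAt (Iio_mem_nhds hrt)
  -- MVT
  set C1 : ℝ := M1 * δ ^ (-(1 + α)) * ε' with hC1def
  have hC10 : 0 ≤ C1 :=
    mul_nonneg (mul_nonneg hM10 (Real.rpow_pos_of_pos hδ0 _).le) hε'0.le
  have hmvt : ∀ r ∈ Icc s b, HasDerivWithinAt (fun r' => g r' - ∫ x in s..r', f x)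
      (-(DS (t - r) (F r))) (Icc s b) r := by
    intro r hr
    have h := (hgderiv r hr).sub (hprim r hr).hasDerivWithinAt
    have : SA (t - r) (v r) + -(DS (t - r) (F r)) - f r
        = -(DS (t - r) (F r)) := by
      rw [hfdef]; abel
    rwa [this] at h
  have hbound : ∀ r ∈ Icc s b, ‖-(DS (t - r) (F r))‖ ≤ C1 := by
    intro r hr
    have hδτ : δ ≤ t - r := by
      have := hr.2; rw [hbdef] at this; linarith
    have hτ : 0 < t - r := lt_of_lt_of_le hδ0 hδτ
    rw [norm_neg]
    calc ‖DS (t - r) (F r)‖ ≤ M1α * (t - r) ^ (-(1 + α)) * ‖F r‖ := hDSb _ _ hτ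
      _ ≤ M1 * (t - r) ^ (-(1 + α)) * ‖F r‖ :=
          mul_le_mul_of_nonneg_right (mul_le_mul_of_nonneg_right (le_max_left _ _)
            (Real.rpow_pos_of_pos hτ _).le) (norm_nonneg _)
      _ ≤ M1 * δ ^ (-(1 + α)) * ε' := by
          have h1 : (t - r) ^ (-(1 + α)) ≤ δ ^ (-(1 + α)) :=
            Real.rpow_le_rpow_of_nonpos hδ0 hδτ (by linarith)
          have h2 : ‖F r‖ ≤ ε' := hFb r ⟨hr.1, hr.2.trans hb2.le⟩
          exact mul_le_mul (mul_le_mul_of_nonneg_left h1 hM10) h2 (norm_nonneg _)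
            (mul_nonneg hM10 (Real.rpow_pos_of_pos hδ0 _).le)
  have hsmem : s ∈ Icc s b := ⟨le_rfl, hb1.le⟩
  have hbmem : b ∈ Icc s b := ⟨hb1.le, le_rfl⟩
  have hMVT := (convex_Icc s b).norm_image_sub_le_of_norm_hasDerivWithin_le
    hmvt hbound hsmem hbmem
  -- simplify: g s = 0, ∫ s..s = 0
  have hgs : g s = 0 := by
    rw [hgdef]
    have : F s = 0 := intervalIntegral.integral_same
    simp only at this ⊢
    rw [this, map_zero]
  have hIss : (∫ x in s..s, f x) = 0 := intervalIntegral.integral_same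
  rw [hgs, hIss, sub_zero, sub_zero] at hMVT
  have hbs : ‖b - s‖ ≤ T := by
    rw [Real.norm_eq_abs, abs_of_nonneg (by linarith)]
    rw [hbdef]; linarith
  have hI1 : ‖∫ x in s..b, f x‖ ≤ Mα * δ ^ (-α) * ε' + C1 * T := by
    have hgb : ‖g b‖ ≤ Mα * δ ^ (-α) * ε' := by
      have hgbeq : g b = SA δ (F b) := by simp only [hgdef]; rw [htb]
      rw [hgbeq]
      calc ‖SA δ (F b)‖ ≤ ‖SA δ‖ * ‖F b‖ := (SA δ).le_opNorm _
        _ ≤ (Mα * δ ^ (-α)) * ε' :=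
            mul_le_mul (hSA δ hδ0) (hFb b ⟨hb1.le, hb2.le⟩) (norm_nonneg _)
              (mul_nonneg hMα0 (Real.rpow_pos_of_pos hδ0 _).le)
    have h7 : ‖(∫ x in s..b, f x)‖ ≤ ‖g b‖ + ‖g b - ∫ x in s..b, f x‖ := by
      have := norm_sub_norm_le (g b) (g b - ∫ x in s..b, f x)
      have h8 : g b - (g b - ∫ x in s..b, f x) = ∫ x in s..b, f x := by abel
      calc ‖(∫ x in s..b, f x)‖ = ‖g b - (g b - ∫ x in s..b, f x)‖ := by rw [h8]
        _ ≤ ‖g b‖ + ‖g b - ∫ x in s..b, f x‖ := norm_sub_le _ _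
    refine h7.trans ?_
    have h9 : ‖g b - ∫ x in s..b, f x‖ ≤ C1 * T :=
      hMVT.trans (mul_le_mul_of_nonneg_left hbs hC10)
    exact add_le_add hgb h9
  have hI2 : ‖∫ x in b..t, f x‖ ≤ ε / 2 := by
    refine key2' b hb1.le hb2.le ?_
    rw [htb]
  have hsplit : (∫ r in s..t, f r) = (∫ x in s..b, f x) + ∫ x in b..t, f x := by
    symm
    apply intervalIntegral.integral_add_adjacent_intervals
    · apply (hfint s le_rfl hst).mono_set
      rw [uIcc_of_le hb1.le, uIcc_of_le hst]
      exact Icc_subset_Icc le_rfl hb2.le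
    · exact hfint b hb1.le hb2.le
  rw [hsplit]
  calc ‖(∫ x in s..b, f x) + ∫ x in b..t, f x‖
      ≤ ‖(∫ x in s..b, f x)‖ + ‖∫ x in b..t, f x‖ := norm_add_le _ _
    _ ≤ (Mα * δ ^ (-α) * ε' + C1 * T) + ε / 2 := add_le_add hI1 hI2
    _ ≤ ε / 2 + ε / 2 := by
        refine add_le_add_left ?_ _
        have : Mα * δ ^ (-α) * ε' + C1 * T
            = (Mα * δ ^ (-α) + M1 * δ ^ (-(1 + α)) * T) * ε' := by
          rw [hC1def]; ring
        rw [this]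
        exact hsum
    _ = ε := by ring
end

section
/- Under the hypotheses of the linear continuity theorem (uniform evolution-system bounds (P̃₁), averaged convergence (P̃₂), and convergence ‖U_n(t,s)-S₀(t-s)‖_{L(X¹,X^α)} → 0 uniformly on {0 ≤ s ≤ t ≤ T}), if ū_n → ū in X with ū ∈ X^α, then U_n(t,s)ū_n → S₀(t-s)ū in X^α, uniformly for t ∈ [δ,T] and s ∈ [0, t-δ], for every 0 < δ < T. -/
open Set Filter

/-- If `‖Uₙ(t,s) - S₀(t-s)‖_{L(X¹,X^α)} → 0` uniformly on `{0 ≤ s ≤ t ≤ T}`, the uniform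
bounds (P̃₁) hold, `X¹` is dense in `X^α`, and `ūₙ → ū` in `X` with `ū ∈ X^α`, then
`Uₙ(t,s)ūₙ → S₀(t-s)ū` in `X^α`, uniformly for `t ∈ [δ,T]`, `s ∈ [0,t-δ]`, any `0 < δ < T`. -/
theorem stmt8 {X Xα X1 : Type*} [NormedAddCommGroup X] [NormedSpace ℝ X] [CompleteSpace X]
    [NormedAddCommGroup Xα] [NormedSpace ℝ Xα] [CompleteSpace Xα]
    [NormedAddCommGroup X1] [NormedSpace ℝ X1]
    (α T K M₀ Cα : ℝ) (hα0 : 0 < α) (hα1 : α < 1) (hT : 0 < T) (hK : 0 < K)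
    (ι : Xα →L[ℝ] X) (ι1 : X1 →L[ℝ] Xα)
    (hdense : DenseRange ι1)
    (hemb : ∀ v : Xα, ‖ι v‖ ≤ Cα * ‖v‖)
    (Uα : ℕ → ℝ → ℝ → X →L[ℝ] Xα)
    (S : ℝ → Xα →L[ℝ] Xα)
    (hSb : ∀ t : ℝ, 0 ≤ t → ‖S t‖ ≤ M₀)
    (hU1 : ∀ n (t s : ℝ), 0 ≤ s → s < t → ‖Uα n t s‖ ≤ K * (1 + (t - s) ^ (-α)))
    (hU2 : ∀ n (t s : ℝ), 0 ≤ s → s ≤ t → ∀ v : Xα, ‖Uα n t s (ι v)‖ ≤ K * ‖v‖)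
    (hconv : ∀ ε > (0:ℝ), ∃ N, ∀ n ≥ N, ∀ t ∈ Icc (0:ℝ) T, ∀ s ∈ Icc (0:ℝ) t,
      ∀ w : X1, ‖Uα n t s (ι (ι1 w)) - S (t - s) (ι1 w)‖ ≤ ε * ‖w‖)
    (un : ℕ → X) (ub : Xα)
    (hun : Tendsto un atTop (nhds (ι ub))) :
    ∀ δ : ℝ, 0 < δ → δ < T → ∀ ε > (0:ℝ), ∃ N, ∀ n ≥ N,
      ∀ t ∈ Icc δ T, ∀ s ∈ Icc (0:ℝ) (t - δ),
        ‖Uα n t s (un n) - S (t - s) ub‖ ≤ ε := by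
  intro δ hδ hδT ε hε
  have hM₀ : 0 ≤ M₀ := le_trans (norm_nonneg _) (hSb 0 le_rfl)
  set C : ℝ := K * (1 + δ ^ (-α)) with hC
  have hδpow : (0:ℝ) ≤ δ ^ (-α) := Real.rpow_nonneg hδ.le _
  have hCpos : 0 < C := mul_pos hK (by linarith)
  -- choose η and w
  set η : ℝ := ε / (6 * (K + M₀ + 1)) with hη
  have hηpos : 0 < η := div_pos hε (by positivity)
  obtain ⟨w, hw⟩ : ∃ w : X1, ‖ι1 w - ub‖ < η := by
    have := Metric.denseRange_iff.mp hdense ub η hηpos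
    obtain ⟨w, hw⟩ := this
    exact ⟨w, by rwa [← dist_eq_norm, dist_comm]⟩
  -- N1 from hconv
  obtain ⟨N1, hN1⟩ := hconv (ε / (3 * (‖w‖ + 1))) (by positivity)
  -- N2 from hun
  obtain ⟨N2, hN2⟩ := Metric.tendsto_atTop.mp hun (ε / (3 * C)) (by positivity)
  refine ⟨max N1 N2, fun n hn t ht s hs => ?_⟩
  have hs0 : 0 ≤ s := hs.1
  have hst : s + δ ≤ t := by linarith [hs.2]
  have hslt : s < t := by linarith
  have ht0T : t ∈ Icc (0:ℝ) T := ⟨by linarith [ht.1], ht.2⟩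
  have hs0t : s ∈ Icc (0:ℝ) t := ⟨hs0, hslt.le⟩
  -- decomposition
  have hdec : Uα n t s (un n) - S (t - s) ub =
      Uα n t s (un n - ι ub) + Uα n t s (ι (ub - ι1 w)) +
      (Uα n t s (ι (ι1 w)) - S (t - s) (ι1 w)) + S (t - s) (ι1 w - ub) := by
    simp only [map_sub]
    abel
  rw [hdec]
  have h1 : ‖Uα n t s (un n - ι ub)‖ ≤ ε / 3 := by
    have hb := hU1 n t s hs0 hslt
    have hpow : (t - s) ^ (-α) ≤ δ ^ (-α) :=
      Real.rpow_le_rpow_of_nonpos hδ (by linarith) (by linarith)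
    have h2 : ‖un n - ι ub‖ ≤ ε / (3 * C) := by
      have := hN2 n (le_trans (le_max_right _ _) hn)
      rw [dist_eq_norm] at this
      exact this.le
    calc ‖Uα n t s (un n - ι ub)‖ ≤ ‖Uα n t s‖ * ‖un n - ι ub‖ :=
          (Uα n t s).le_opNorm _
      _ ≤ C * (ε / (3 * C)) := by
          apply mul_le_mul (le_trans hb ?_) h2 (norm_nonneg _) hCpos.le
          exact mul_le_mul_of_nonneg_left (by linarith) hK.le
      _ = ε / 3 := by field_simp
  have h2 : ‖Uα n t s (ι (ub - ι1 w))‖ ≤ K * η := by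
    have := hU2 n t s hs0 hslt.le (ub - ι1 w)
    refine this.trans ?_
    have : ‖ub - ι1 w‖ ≤ η := by rw [norm_sub_rev]; exact hw.le
    exact mul_le_mul_of_nonneg_left this hK.le
  have h3 : ‖Uα n t s (ι (ι1 w)) - S (t - s) (ι1 w)‖ ≤ ε / 3 := by
    have := hN1 n (le_trans (le_max_left _ _) hn) t ht0T s hs0t w
    refine this.trans ?_
    rw [div_mul_eq_mul_div, div_le_div_iff₀ (by positivity) (by norm_num)]
    nlinarith [norm_nonneg w, hε]
  have h4 : ‖S (t - s) (ι1 w - ub)‖ ≤ M₀ * η := by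
    calc ‖S (t - s) (ι1 w - ub)‖ ≤ ‖S (t - s)‖ * ‖ι1 w - ub‖ := (S (t-s)).le_opNorm _
      _ ≤ M₀ * η := mul_le_mul (hSb _ (by linarith)) hw.le (norm_nonneg _) hM₀
  have hsum : (K + M₀) * η ≤ ε / 3 := by
    rw [hη, mul_comm, div_mul_eq_mul_div, div_le_div_iff₀ (by positivity) (by norm_num)]
    nlinarith
  calc ‖Uα n t s (un n - ι ub) + Uα n t s (ι (ub - ι1 w)) +
        (Uα n t s (ι (ι1 w)) - S (t - s) (ι1 w)) + S (t - s) (ι1 w - ub)‖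
      ≤ ‖Uα n t s (un n - ι ub) + Uα n t s (ι (ub - ι1 w)) +
        (Uα n t s (ι (ι1 w)) - S (t - s) (ι1 w))‖ + ‖S (t - s) (ι1 w - ub)‖ :=
        norm_add_le _ _
    _ ≤ (‖Uα n t s (un n - ι ub) + Uα n t s (ι (ub - ι1 w))‖ +
        ‖Uα n t s (ι (ι1 w)) - S (t - s) (ι1 w)‖) + ‖S (t - s) (ι1 w - ub)‖ := by
        gcongr; exact norm_add_le _ _
    _ ≤ ((‖Uα n t s (un n - ι ub)‖ + ‖Uα n t s (ι (ub - ι1 w))‖) +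
        ‖Uα n t s (ι (ι1 w)) - S (t - s) (ι1 w)‖) + ‖S (t - s) (ι1 w - ub)‖ := by
        gcongr; exact norm_add_le _ _
    _ ≤ ((ε / 3 + K * η) + ε / 3) + M₀ * η := by gcongr
    _ ≤ ε := by nlinarith
end

section
/- Let A : X¹ → X be such that the rescaled families A^{(λ)}(t) := A(t/λ) satisfy: for all t ≥ 0, (1/ω)∫₀^ω A(ρ)u dρ → Â u as ω → ∞ for u ∈ X¹, and ‖A(t)‖_{L(X¹,X)} ≤ C₂ uniformly, ‖Â‖_{L(X¹,X)} ≤ C₂. Then for any sequence λ_n → 0⁺, ∫₀ᵗ (A(r/λ_n) - Â) dr → 0 in L(X¹,X), uniformly with respect to t ∈ [0,T] for each T > 0. -/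
open Set Filter intervalIntegral

/-- Averaging of the linear part: if `(1/ω)∫₀^ω A(ρ)dρ → Â` in `L(X¹,X)` and the operators
are uniformly bounded, then for `λₙ → 0⁺`, `∫₀ᵗ (A(r/λₙ) - Â) dr → 0` in `L(X¹,X)`,
uniformly for `t ∈ [0,T]`. -/
theorem stmt9 {X X1 : Type*} [NormedAddCommGroup X] [NormedSpace ℝ X] [CompleteSpace X]
    [NormedAddCommGroup X1] [NormedSpace ℝ X1]
    (A : ℝ → X1 →L[ℝ] X) (Ahat : X1 →L[ℝ] X) (C₂ : ℝ)
    (hAcont : Continuous A)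
    (hAb : ∀ t : ℝ, 0 ≤ t → ‖A t‖ ≤ C₂) (hAhatb : ‖Ahat‖ ≤ C₂)
    (havg : ∀ ε > (0:ℝ), ∃ Ω > (0:ℝ), ∀ ω ≥ Ω,
      ‖(ω⁻¹ : ℝ) • (∫ ρ in (0:ℝ)..ω, A ρ) - Ahat‖ ≤ ε)
    (lam : ℕ → ℝ) (hlam : ∀ n, 0 < lam n)
    (hlam0 : Tendsto lam atTop (nhds 0))
    (T : ℝ) (hT : 0 < T) :
    ∀ ε > (0:ℝ), ∃ N, ∀ n ≥ N, ∀ t ∈ Icc (0:ℝ) T,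
      ‖∫ r in (0:ℝ)..t, (A (r / lam n) - Ahat)‖ ≤ ε := by
  intro ε hε
  have hC₂ : 0 ≤ C₂ := le_trans (norm_nonneg _) (hAb 0 le_rfl)
  set δ : ℝ := ε / (2 * C₂ + 1) with hδdef
  have hδ : 0 < δ := div_pos hε (by linarith)
  obtain ⟨Ω, hΩ, hav⟩ := havg (ε / T) (div_pos hε hT)
  have hδΩ : 0 < δ / Ω := div_pos hδ hΩ
  obtain ⟨N, hN⟩ := (hlam0.eventually_lt_const hδΩ).exists_forall_of_atTop
  refine ⟨N, fun n hn t ht => ?_⟩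
  obtain ⟨ht0, htT⟩ := ht
  have hL : 0 < lam n := hlam n
  rcases le_or_gt t δ with htδ | htδ
  · -- small t : crude bound
    have hbound : ∀ x ∈ Set.uIoc (0:ℝ) t, ‖A (x / lam n) - Ahat‖ ≤ 2 * C₂ := by
      intro x hx
      rw [Set.uIoc_of_le ht0] at hx
      have hx0 : 0 ≤ x / lam n := div_nonneg hx.1.le hL.le
      calc ‖A (x / lam n) - Ahat‖ ≤ ‖A (x / lam n)‖ + ‖Ahat‖ := norm_sub_le _ _
        _ ≤ C₂ + C₂ := add_le_add (hAb _ hx0) hAhatb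
        _ = 2 * C₂ := by ring
    have := intervalIntegral.norm_integral_le_of_norm_le_const hbound
    have habs : |t - 0| = t := by rw [sub_zero, abs_of_nonneg ht0]
    rw [habs] at this
    have : ‖∫ r in (0:ℝ)..t, (A (r / lam n) - Ahat)‖ ≤ 2 * C₂ * δ :=
      this.trans (mul_le_mul_of_nonneg_left htδ (by linarith))
    refine this.trans ?_
    have : (2 * C₂ + 1) * δ = ε := by
      rw [hδdef]; field_simp
    nlinarith
  · -- large t : use averaging
    have ht0' : 0 < t := hδ.trans htδ
    have hLn : lam n < δ / Ω := hN n hn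
    have hω : t / lam n ≥ Ω := by
      rw [ge_iff_le, le_div_iff₀ hL]
      have h1 : Ω * lam n < Ω * (δ / Ω) := by
        exact (mul_lt_mul_iff_right₀ hΩ).mpr hLn
      rw [mul_div_cancel₀ _ (ne_of_gt hΩ)] at h1
      linarith
    -- rewrite the integral
    have hint : IntervalIntegrable (fun r => A (r / lam n)) MeasureTheory.volume 0 t :=
      (hAcont.comp (continuous_id.div_const _)).intervalIntegrable _ _
    have hintc : IntervalIntegrable (fun _ : ℝ => Ahat) MeasureTheory.volume 0 t :=
      intervalIntegrable_const
    have hsplit : (∫ r in (0:ℝ)..t, (A (r / lam n) - Ahat))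
        = (∫ r in (0:ℝ)..t, A (r / lam n)) - (∫ r in (0:ℝ)..t, (Ahat : X1 →L[ℝ] X)) :=
      intervalIntegral.integral_sub hint hintc
    have hcomp : (∫ r in (0:ℝ)..t, A (r / lam n))
        = lam n • ∫ ρ in (0:ℝ)/lam n..t/lam n, A ρ :=
      intervalIntegral.integral_comp_div (f := A) (ne_of_gt hL)
    have hconst : (∫ r in (0:ℝ)..t, (Ahat : X1 →L[ℝ] X)) = (t - 0) • Ahat :=
      intervalIntegral.integral_const _
    have hω0 : (0:ℝ) < t / lam n := div_pos ht0' hL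
    have hkey : (∫ r in (0:ℝ)..t, (A (r / lam n) - Ahat))
        = t • (((t / lam n)⁻¹ : ℝ) • (∫ ρ in (0:ℝ)..(t / lam n), A ρ) - Ahat) := by
      rw [hsplit, hcomp, hconst, zero_div, sub_zero, smul_sub, smul_smul]
      congr 2
      field_simp
    rw [hkey]
    have hns : ‖t • (((t / lam n)⁻¹ : ℝ) • (∫ ρ in (0:ℝ)..(t / lam n), A ρ) - Ahat)‖
        = |t| * ‖((t / lam n)⁻¹ : ℝ) • (∫ ρ in (0:ℝ)..(t / lam n), A ρ) - Ahat‖ :=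
      norm_smul (β := X1 →L[ℝ] X) t _
    rw [hns, abs_of_nonneg ht0]
    calc t * ‖((t / lam n)⁻¹ : ℝ) • (∫ ρ in (0:ℝ)..(t / lam n), A ρ) - Ahat‖
        ≤ T * (ε / T) := by
          apply mul_le_mul htT (hav _ hω) (norm_nonneg _) hT.le
      _ = ε := by field_simp
end

section
/- Let X be a Banach space with scale X^α, let U_n, U₀ be evolution systems satisfying ‖U_n(t,s)‖_{L(X,X^α)} ≤ K(1+(t-s)^{-α}) uniformly in n, and suppose U_n(t,s)ū → U₀(t,s)ū in X^α uniformly on {0 ≤ s ≤ t ≤ T} for each ū ∈ X^α. Let F ⊂ X be relatively compact with F ⊂ X^α, and let f_n ∈ L^∞([0,T], X) with f_n(t) ∈ F for a.e. t. Then ∫₀ᵗ [U_n(t,s) - U₀(t,s)] f_n(s) ds → 0 in X^α, uniformly with respect to t ∈ [0,T]. -/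
open Set MeasureTheory intervalIntegral

/-- If the evolution systems `Uₙ` satisfy the uniform bound `‖Uₙ(t,s)‖_{L(X,X^α)} ≤
K(1+(t-s)^{-α})` and `Uₙ(t,s)ū → U₀(t,s)ū` in `X^α` uniformly on `{0 ≤ s ≤ t ≤ T}` for each
`ū ∈ X^α`, and `fₙ ∈ L^∞([0,T],X)` take a.e. values in a set `F ⊂ X^α` which is relatively
compact in `X`, then `∫₀ᵗ [Uₙ(t,s) - U₀(t,s)] fₙ(s) ds → 0` in `X^α` uniformly on `[0,T]`. -/
theorem stmt10 {X Xα : Type*} [NormedAddCommGroup X] [NormedSpace ℝ X] [CompleteSpace X]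
    [NormedAddCommGroup Xα] [NormedSpace ℝ Xα] [CompleteSpace Xα]
    (α T K : ℝ) (hα0 : 0 < α) (hα1 : α < 1) (hT : 0 < T) (hK : 0 < K)
    (ι : Xα →L[ℝ] X)
    (U : ℕ → ℝ → ℝ → X →L[ℝ] Xα)
    (hU : ∀ n (t s : ℝ), 0 ≤ s → s < t → ‖U n t s‖ ≤ K * (1 + (t - s) ^ (-α)))
    (hconv : ∀ v : Xα, ∀ ε > (0:ℝ), ∃ N, ∀ n ≥ N, ∀ t ∈ Icc (0:ℝ) T, ∀ s ∈ Icc (0:ℝ) t,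
      ‖U n t s (ι v) - U 0 t s (ι v)‖ ≤ ε)
    (F : Set Xα) (hF : IsCompact (closure (ι '' F)))
    (f : ℕ → ℝ → Xα)
    (hfm : ∀ n, AEStronglyMeasurable (fun s => ι (f n s))
      (volume.restrict (Icc (0:ℝ) T)))
    (hfF : ∀ n, ∀ᵐ s ∂(volume.restrict (Icc (0:ℝ) T)), f n s ∈ F) :
    ∀ ε > (0:ℝ), ∃ N, ∀ n ≥ N, ∀ t ∈ Icc (0:ℝ) T,
      ‖∫ s in (0:ℝ)..t, (U n t s (ι (f n s)) - U 0 t s (ι (f n s)))‖ ≤ ε := by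
  classical
  intro ε hε
  -- auxiliary constants
  have h1α : (0:ℝ) < 1 - α := by linarith
  set C : ℝ := T + T ^ (1 - α) / (1 - α) with hC
  have hTpow : (0:ℝ) < T ^ (1 - α) := Real.rpow_pos_of_pos hT _
  have hCpos : 0 < C := by
    have : 0 < T ^ (1 - α) / (1 - α) := div_pos hTpow h1α
    have := hT; simp only [hC]; linarith
  set δ : ℝ := ε / (4 * K * C) with hδdef
  have hδ : 0 < δ := by
    apply div_pos hε; positivity
  set η : ℝ := ε / (2 * T) with hηdef
  have hη : 0 < η := by apply div_pos hε; positivity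
  -- totally bounded: finite δ-net inside ι '' F
  have hTB : TotallyBounded (ι '' F) :=
    (hF.totallyBounded).subset subset_closure
  obtain ⟨s0, hs0sub, hs0fin, hs0cov⟩ :=
    totallyBounded_iff_subset.mp hTB _ (Metric.dist_mem_uniformity hδ)
  -- a choice function pulling net points back to F
  have hg : ∀ x ∈ ι '' F, ∃ v, v ∈ F ∧ ι v = x := fun x hx => hx
  set g0 : X → Xα := fun x => if h : x ∈ ι '' F then (hg x h).choose else 0 with hg0
  have hg0spec : ∀ x ∈ ι '' F, g0 x ∈ F ∧ ι (g0 x) = x := by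
    intro x hx
    simp only [hg0, dif_pos hx]
    exact (hg x hx).choose_spec
  -- for each v ∈ Xα get a rank from hconv
  choose Nf hNf using fun v : Xα => hconv v η hη
  set N : ℕ := hs0fin.toFinset.sup (fun x => Nf (g0 x)) with hN
  refine ⟨N, ?_⟩
  intro n hn t ht
  obtain ⟨ht0, htT⟩ := ht
  -- the dominating function
  set G : ℝ → ℝ := fun s => (2 * K * δ + η) + (2 * K * δ) * (t - s) ^ (-α) with hG
  -- integrability of the dominating function
  have hint0 : IntervalIntegrable (fun x : ℝ => x ^ (-α)) volume 0 t :=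
    intervalIntegral.intervalIntegrable_rpow' (by linarith)
  have hint1 : IntervalIntegrable (fun s : ℝ => (t - s) ^ (-α)) volume 0 t := by
    have := (intervalIntegral.intervalIntegrable_rpow' (by linarith : (-1:ℝ) < -α)
      (a := 0) (b := t)).comp_sub_left t
    simpa using this.symm
  have hintG : IntervalIntegrable G volume 0 t := by
    exact (_root_.intervalIntegrable_const).add (hint1.const_mul _)
  -- pointwise a.e. bound
  have haemem : ∀ᵐ s ∂(volume.restrict (uIoc (0:ℝ) t)), s ∈ uIoc (0:ℝ) t :=
    ae_restrict_mem measurableSet_uIoc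
  have hsubset : uIoc (0:ℝ) t ⊆ Icc (0:ℝ) T := by
    rw [uIoc_of_le ht0]
    intro s hs
    exact ⟨hs.1.le, hs.2.trans htT⟩
  have haeF : ∀ᵐ s ∂(volume.restrict (uIoc (0:ℝ) t)), f n s ∈ F :=
    ae_restrict_of_ae_restrict_of_subset hsubset (hfF n)
  have haene : ∀ᵐ s ∂(volume.restrict (uIoc (0:ℝ) t)), s ≠ t := by
    refine ae_restrict_of_ae ?_
    refine ae_iff.mpr ?_
    simp [not_not, Set.setOf_eq_eq_singleton]
  have hbound : ∀ᵐ s ∂(volume.restrict (uIoc (0:ℝ) t)),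
      ‖U n t s (ι (f n s)) - U 0 t s (ι (f n s))‖ ≤ G s := by
    filter_upwards [haemem, haeF, haene] with s hs hsF hst
    rw [uIoc_of_le ht0] at hs
    have hs0' : 0 < s := hs.1
    have hst' : s < t := lt_of_le_of_ne hs.2 hst
    -- pick a net point close to ι (f n s)
    have hw : ι (f n s) ∈ ι '' F := mem_image_of_mem ι hsF
    obtain ⟨y, hy, hdy⟩ := mem_iUnion₂.mp (hs0cov hw)
    have hyF : y ∈ ι '' F := hs0sub hy
    obtain ⟨hgF, hgy⟩ := hg0spec y hyF
    have hdy' : ‖ι (f n s) - ι (g0 y)‖ < δ := by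
      rw [hgy]
      simpa [dist_eq_norm] using hdy
    -- operator bounds
    have hr0 : (0:ℝ) ≤ (t - s) ^ (-α) := Real.rpow_nonneg (by linarith) _
    have hKb : (0:ℝ) ≤ K * (1 + (t - s) ^ (-α)) := by positivity
    have hUn := hU n t s hs0'.le hst'
    have hU0 := hU 0 t s hs0'.le hst'
    have hnet : ‖U n t s (ι (g0 y)) - U 0 t s (ι (g0 y))‖ ≤ η := by
      have hle : Nf (g0 y) ≤ N := Finset.le_sup (f := fun x => Nf (g0 x)) (hs0fin.mem_toFinset.mpr hy)
      exact hNf (g0 y) n (le_trans hle hn) t ⟨ht0, htT⟩ s ⟨hs0'.le, hst'.le⟩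
    have hA : ‖U n t s (ι (f n s) - ι (g0 y))‖ ≤ K * (1 + (t - s) ^ (-α)) * δ := by
      calc ‖U n t s (ι (f n s) - ι (g0 y))‖ ≤ ‖U n t s‖ * ‖ι (f n s) - ι (g0 y)‖ :=
            (U n t s).le_opNorm _
        _ ≤ K * (1 + (t - s) ^ (-α)) * δ :=
            mul_le_mul hUn hdy'.le (norm_nonneg _) hKb
    have hB : ‖U 0 t s (ι (f n s) - ι (g0 y))‖ ≤ K * (1 + (t - s) ^ (-α)) * δ := by
      calc ‖U 0 t s (ι (f n s) - ι (g0 y))‖ ≤ ‖U 0 t s‖ * ‖ι (f n s) - ι (g0 y)‖ :=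
            (U 0 t s).le_opNorm _
        _ ≤ K * (1 + (t - s) ^ (-α)) * δ :=
            mul_le_mul hU0 hdy'.le (norm_nonneg _) hKb
    have hsplit : U n t s (ι (f n s)) - U 0 t s (ι (f n s)) =
        (U n t s (ι (f n s) - ι (g0 y)) - U 0 t s (ι (f n s) - ι (g0 y))) +
        (U n t s (ι (g0 y)) - U 0 t s (ι (g0 y))) := by
      simp only [map_sub]; abel
    calc ‖U n t s (ι (f n s)) - U 0 t s (ι (f n s))‖
        ≤ ‖U n t s (ι (f n s) - ι (g0 y)) - U 0 t s (ι (f n s) - ι (g0 y))‖ +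
          ‖U n t s (ι (g0 y)) - U 0 t s (ι (g0 y))‖ := by
            rw [hsplit]; exact norm_add_le _ _
      _ ≤ (‖U n t s (ι (f n s) - ι (g0 y))‖ + ‖U 0 t s (ι (f n s) - ι (g0 y))‖) + η := by
            gcongr
            all_goals first | exact norm_sub_le _ _ | exact hnet
      _ ≤ (K * (1 + (t - s) ^ (-α)) * δ + K * (1 + (t - s) ^ (-α)) * δ) + η := by gcongr
      _ = G s := by simp only [hG]; ring
  -- the comparison
  have hcomp := (intervalIntegral.norm_integral_le_of_norm_le ht0
    (by rw [uIoc_of_le ht0] at hbound; exact (ae_restrict_iff' measurableSet_Ioc).mp hbound)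
    hintG).trans (le_abs_self _)
  refine hcomp.trans ?_
  -- compute ∫ G
  have hval1 : (∫ s in (0:ℝ)..t, (t - s) ^ (-α)) = t ^ (1 - α) / (1 - α) := by
    have h1 : (∫ s in (0:ℝ)..t, (t - s) ^ (-α)) = ∫ x in (t - t)..(t - 0), x ^ (-α) :=
      intervalIntegral.integral_comp_sub_left (fun x : ℝ => x ^ (-α)) t
    rw [h1]
    simp only [sub_self, sub_zero]
    rw [integral_rpow (Or.inl (by linarith))]
    rw [Real.zero_rpow (by linarith : -α + 1 ≠ 0),
      show -α + 1 = 1 - α from by ring]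
    ring
  have hvalG : (∫ s in (0:ℝ)..t, G s) =
      (2 * K * δ + η) * t + (2 * K * δ) * (t ^ (1 - α) / (1 - α)) := by
    simp only [hG]
    rw [intervalIntegral.integral_add (_root_.intervalIntegrable_const) (hint1.const_mul _),
      intervalIntegral.integral_const, intervalIntegral.integral_const_mul, hval1]
    simp [mul_comm]
  rw [hvalG]
  -- positivity of the value, remove abs
  have htpow : (0:ℝ) ≤ t ^ (1 - α) := Real.rpow_nonneg ht0 _
  have hvnn : 0 ≤ (2 * K * δ + η) * t + (2 * K * δ) * (t ^ (1 - α) / (1 - α)) := by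
    have h1 : (0:ℝ) ≤ t ^ (1 - α) / (1 - α) := div_nonneg htpow h1α.le
    positivity
  rw [abs_of_nonneg hvnn]
  -- final estimate
  have htpowle : t ^ (1 - α) ≤ T ^ (1 - α) := Real.rpow_le_rpow ht0 htT h1α.le
  have hkey : t + t ^ (1 - α) / (1 - α) ≤ C := by
    simp only [hC]
    gcongr
  have hδval : 2 * K * δ * C = ε / 2 := by
    rw [hδdef]
    field_simp <;> ring
  have hηval : η * T = ε / 2 := by
    rw [hηdef]
    field_simp <;> ring
  calc (2 * K * δ + η) * t + (2 * K * δ) * (t ^ (1 - α) / (1 - α))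
      = 2 * K * δ * (t + t ^ (1 - α) / (1 - α)) + η * t := by ring
    _ ≤ 2 * K * δ * C + η * T := by
        have h2 : 0 ≤ 2 * K * δ := by positivity
        gcongr
    _ = ε := by rw [hδval, hηval]; ring
end

section
/- Under the same assumptions on a_{ij} and g, suppose additionally that |a_{ij}(t) - a_{ij}(s)| ≤ L̄|t-s|^γ and |g(t)-g(s)| ≤ L̄|t-s|^γ for some γ ∈ (0,1]. Then there is a constant L > 0 such that ‖(A(t) - A(s)) A(r)^{-1}‖_{L(L², L²)} ≤ L |t-s|^γ for all r, s, t ≥ 0. -/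
open MeasureTheory Finset

/-- Hölder estimate `‖(A(t)-A(s))A(r)⁻¹‖_{L(L²,L²)} ≤ L|t-s|^γ`, formulated on the Fourier
side: `(A(t)-A(s))A(r)⁻¹` acts as multiplication by `(m t ξ - m s ξ)/(m r ξ)` where
`m t ξ = Σ aᵢⱼ(t)ξᵢξⱼ + g(t)`. -/
theorem stmt14 (N : ℕ) (hN : 1 ≤ N)
    (a : ℝ → Fin N → Fin N → ℝ) (g : ℝ → ℝ) (ν₀ aInf c₁ c₂ Lb γ : ℝ)
    (hν₀ : 0 < ν₀) (hc₁ : 0 < c₁) (hLb : 0 < Lb) (hγ0 : 0 < γ) (hγ1 : γ ≤ 1)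
    (hsymm : ∀ t : ℝ, 0 ≤ t → ∀ i j, a t i j = a t j i)
    (hab : ∀ t : ℝ, 0 ≤ t → ∀ i j, |a t i j| ≤ aInf)
    (hell : ∀ t : ℝ, 0 ≤ t → ∀ ξ : Fin N → ℝ,
      ν₀ * (∑ i, (ξ i) ^ 2) ≤ ∑ i, ∑ j, a t i j * ξ i * ξ j)
    (hg : ∀ t : ℝ, 0 ≤ t → c₁ ≤ g t ∧ g t ≤ c₂)
    (haH : ∀ s t : ℝ, 0 ≤ s → 0 ≤ t → ∀ i j, |a t i j - a s i j| ≤ Lb * |t - s| ^ γ)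
    (hgH : ∀ s t : ℝ, 0 ≤ s → 0 ≤ t → |g t - g s| ≤ Lb * |t - s| ^ γ) :
    ∃ L > (0:ℝ), ∀ r s t : ℝ, 0 ≤ r → 0 ≤ s → 0 ≤ t → ∀ w : (Fin N → ℝ) → ℂ,
      Integrable (fun ξ => ‖w ξ‖ ^ 2) →
      Real.sqrt (∫ ξ,
          ((((∑ i, ∑ j, a t i j * ξ i * ξ j) + g t)
            - ((∑ i, ∑ j, a s i j * ξ i * ξ j) + g s))
          / ((∑ i, ∑ j, a r i j * ξ i * ξ j) + g r)) ^ 2 * ‖w ξ‖ ^ 2)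
        ≤ L * |t - s| ^ γ * Real.sqrt (∫ ξ, ‖w ξ‖ ^ 2) := by
  have hKpos : (0:ℝ) < max (N / ν₀) (1 / c₁) :=
    lt_max_of_lt_right (by positivity)
  set K : ℝ := max (N / ν₀) (1 / c₁) with hKdef
  refine ⟨Lb * K, by positivity, ?_⟩
  intro r s t hr hs ht w hw
  set δ : ℝ := |t - s| ^ γ with hδdef
  have hδ0 : 0 ≤ δ := Real.rpow_nonneg (abs_nonneg _) γ
  have key : ∀ ξ : Fin N → ℝ,
      ((((∑ i, ∑ j, a t i j * ξ i * ξ j) + g t)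
            - ((∑ i, ∑ j, a s i j * ξ i * ξ j) + g s))
          / ((∑ i, ∑ j, a r i j * ξ i * ξ j) + g r)) ^ 2 ≤ (Lb * K * δ) ^ 2 := by
    intro ξ
    set S : ℝ := ∑ i, (ξ i) ^ 2 with hSdef
    have hS0 : 0 ≤ S := Finset.sum_nonneg fun i _ => sq_nonneg _
    have hD : ν₀ * S + c₁ ≤ (∑ i, ∑ j, a r i j * ξ i * ξ j) + g r :=
      add_le_add (hell r hr ξ) (hg r hr).1
    have hDpos : 0 < (∑ i, ∑ j, a r i j * ξ i * ξ j) + g r :=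
      lt_of_lt_of_le (by positivity) hD
    have hsum : (∑ i, |ξ i|) ^ 2 ≤ (N : ℝ) * S := by
      have h := sq_sum_le_card_mul_sum_sq (s := (univ : Finset (Fin N)))
        (f := fun i => |ξ i|)
      simpa [hSdef, sq_abs] using h
    have hNum : |(∑ i, ∑ j, a t i j * ξ i * ξ j) + g t
        - ((∑ i, ∑ j, a s i j * ξ i * ξ j) + g s)|
        ≤ Lb * δ * ((N : ℝ) * S + 1) := by
      have h1 : (∑ i, ∑ j, a t i j * ξ i * ξ j) + g t
          - ((∑ i, ∑ j, a s i j * ξ i * ξ j) + g s)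
          = (∑ i, ∑ j, (a t i j - a s i j) * ξ i * ξ j) + (g t - g s) := by
        simp only [sub_mul, Finset.sum_sub_distrib]
        ring
      rw [h1]
      have h2 : |∑ i, ∑ j, (a t i j - a s i j) * ξ i * ξ j|
          ≤ Lb * δ * ((N : ℝ) * S) := by
        calc |∑ i, ∑ j, (a t i j - a s i j) * ξ i * ξ j|
            ≤ ∑ i, |∑ j, (a t i j - a s i j) * ξ i * ξ j| :=
              Finset.abs_sum_le_sum_abs _ _
          _ ≤ ∑ i, ∑ j, |(a t i j - a s i j) * ξ i * ξ j| :=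
              Finset.sum_le_sum fun i _ => Finset.abs_sum_le_sum_abs _ _
          _ ≤ ∑ i, ∑ j, (Lb * δ) * (|ξ i| * |ξ j|) := by
              refine Finset.sum_le_sum fun i _ => Finset.sum_le_sum fun j _ => ?_
              rw [abs_mul, abs_mul, mul_assoc]
              exact mul_le_mul_of_nonneg_right (haH s t hs ht i j) (by positivity)
          _ = (Lb * δ) * (∑ i, |ξ i|) ^ 2 := by
              rw [sq, Finset.sum_mul_sum]
              rw [Finset.mul_sum]
              exact Finset.sum_congr rfl fun i _ => by
                rw [Finset.mul_sum]
          _ ≤ Lb * δ * ((N : ℝ) * S) :=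
              mul_le_mul_of_nonneg_left hsum (by positivity)
      calc |(∑ i, ∑ j, (a t i j - a s i j) * ξ i * ξ j) + (g t - g s)|
          ≤ |∑ i, ∑ j, (a t i j - a s i j) * ξ i * ξ j| + |g t - g s| := abs_add_le _ _
        _ ≤ Lb * δ * ((N : ℝ) * S) + Lb * δ := add_le_add h2 (hgH s t hs ht)
        _ = Lb * δ * ((N : ℝ) * S + 1) := by ring
    have hK1 : (N : ℝ) * S + 1 ≤ K * (ν₀ * S + c₁) := by
      have hA : (N : ℝ) * S ≤ K * (ν₀ * S) := by
        have : (N : ℝ) / ν₀ ≤ K := le_max_left _ _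
        calc (N : ℝ) * S = ((N : ℝ) / ν₀) * (ν₀ * S) := by
              field_simp
          _ ≤ K * (ν₀ * S) := mul_le_mul_of_nonneg_right this (by positivity)
      have hB : (1:ℝ) ≤ K * c₁ := by
        have : (1:ℝ) / c₁ ≤ K := le_max_right _ _
        calc (1:ℝ) = (1 / c₁) * c₁ := by field_simp
          _ ≤ K * c₁ := mul_le_mul_of_nonneg_right this hc₁.le
      calc (N : ℝ) * S + 1 ≤ K * (ν₀ * S) + K * c₁ := add_le_add hA hB
        _ = K * (ν₀ * S + c₁) := by ring
    have habs : |(((∑ i, ∑ j, a t i j * ξ i * ξ j) + g t)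
            - ((∑ i, ∑ j, a s i j * ξ i * ξ j) + g s))
          / ((∑ i, ∑ j, a r i j * ξ i * ξ j) + g r)| ≤ Lb * K * δ := by
      rw [abs_div, abs_of_pos hDpos, div_le_iff₀ hDpos]
      calc |(∑ i, ∑ j, a t i j * ξ i * ξ j) + g t
            - ((∑ i, ∑ j, a s i j * ξ i * ξ j) + g s)|
          ≤ Lb * δ * ((N : ℝ) * S + 1) := hNum
        _ ≤ Lb * δ * (K * (ν₀ * S + c₁)) :=
            mul_le_mul_of_nonneg_left hK1 (by positivity)
        _ ≤ Lb * δ * (K * ((∑ i, ∑ j, a r i j * ξ i * ξ j) + g r)) := by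
            refine mul_le_mul_of_nonneg_left ?_ (by positivity)
            exact mul_le_mul_of_nonneg_left hD hKpos.le
        _ = Lb * K * δ * ((∑ i, ∑ j, a r i j * ξ i * ξ j) + g r) := by ring
    calc ((((∑ i, ∑ j, a t i j * ξ i * ξ j) + g t)
            - ((∑ i, ∑ j, a s i j * ξ i * ξ j) + g s))
          / ((∑ i, ∑ j, a r i j * ξ i * ξ j) + g r)) ^ 2
        = |(((∑ i, ∑ j, a t i j * ξ i * ξ j) + g t)
            - ((∑ i, ∑ j, a s i j * ξ i * ξ j) + g s))
          / ((∑ i, ∑ j, a r i j * ξ i * ξ j) + g r)| ^ 2 := (sq_abs _).symm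
      _ ≤ (Lb * K * δ) ^ 2 := by
          exact pow_le_pow_left₀ (abs_nonneg _) habs 2
  have hmono : (∫ ξ, ((((∑ i, ∑ j, a t i j * ξ i * ξ j) + g t)
            - ((∑ i, ∑ j, a s i j * ξ i * ξ j) + g s))
          / ((∑ i, ∑ j, a r i j * ξ i * ξ j) + g r)) ^ 2 * ‖w ξ‖ ^ 2)
      ≤ ∫ ξ, (Lb * K * δ) ^ 2 * ‖w ξ‖ ^ 2 := by
    refine integral_mono_of_nonneg (Filter.Eventually.of_forall fun ξ => by positivity)
      (hw.const_mul _) (Filter.Eventually.of_forall fun ξ => ?_)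
    exact mul_le_mul_of_nonneg_right (key ξ) (by positivity)
  have hI0 : (0:ℝ) ≤ ∫ ξ, ‖w ξ‖ ^ 2 :=
    integral_nonneg fun ξ => by positivity
  calc Real.sqrt (∫ ξ, ((((∑ i, ∑ j, a t i j * ξ i * ξ j) + g t)
            - ((∑ i, ∑ j, a s i j * ξ i * ξ j) + g s))
          / ((∑ i, ∑ j, a r i j * ξ i * ξ j) + g r)) ^ 2 * ‖w ξ‖ ^ 2)
      ≤ Real.sqrt ((Lb * K * δ) ^ 2 * ∫ ξ, ‖w ξ‖ ^ 2) := by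
        refine Real.sqrt_le_sqrt ?_
        rw [← integral_const_mul]
        exact hmono
    _ = (Lb * K * δ) * Real.sqrt (∫ ξ, ‖w ξ‖ ^ 2) := by
        rw [Real.sqrt_mul (sq_nonneg _), Real.sqrt_sq (by positivity)]
    _ = Lb * K * |t - s| ^ γ * Real.sqrt (∫ ξ, ‖w ξ‖ ^ 2) := by rw [hδdef]
end
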